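/- Under the Case-C1 setup, every path from s_1 to v_2 contains v_6, and every path from s_2 to v_2 contains v_6. -/

import Mathlib

open List

/-- `IsPath E p u w` : the nonempty list `p` of vertices is a directed path
from `u` to `w` with respect to the edge relation `E`. -/
def IsPath {V : Type*} (E : V → V → Prop) (p : List V) (u w : V) : Prop :=
  p ≠ [] ∧ p.head? = some u ∧ p.getLast? = some w ∧ p.Chain' E

/-- `Reaches E u w` (written `u ~> w`) : there is a directed path from `u` to `w`. -/
def Reaches {V : Type*} (E : V → V → Prop) (u w : V) : Prop :=
  ∃ p, IsPath E p u w

/-- A two-unicast layered network: a finite directed graph, with two sources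
`s1, s2` and two destinations `d1, d2` (all four distinct), vertices partitioned
into layers `1, ..., r` such that every edge goes from a layer to the next one,
the first layer is `{s1, s2}`, the last layer is `{d1, d2}`, and each source
reaches its corresponding destination. -/
structure TwoUnicastNetwork (V : Type*) [Fintype V] where
  E : V → V → Prop
  s1 : V
  s2 : V
  d1 : V
  d2 : V
  r : ℕ
  layer : V → ℕ
  layer_pos : ∀ v, 1 ≤ layer v
  layer_le : ∀ v, layer v ≤ r
  edge_layer : ∀ u w, E u w → layer w = layer u + 1
  s_ne : s1 ≠ s2
  d_ne : d1 ≠ d2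
  sd_ne : ∀ s d, (s = s1 ∨ s = s2) → (d = d1 ∨ d = d2) → s ≠ d
  first_layer : ∀ v, layer v = 1 ↔ v = s1 ∨ v = s2
  last_layer : ∀ v, layer v = r ↔ v = d1 ∨ v = d2
  conn1 : Reaches E s1 d1
  conn2 : Reaches E s2 d2

/-- `InterferesOn N S Ri srcOther v` : within the induced subgraph `G[S]`, the
node `v` causes interference on the path `Ri` : `v ∈ S`, `v ∉ Ri`, there is an
edge (inside `G[S]`) from `v` into a node of `Ri`, and there is a path from the
other source `srcOther` to `v` lying inside `G[S]` and disjoint from `Ri`. -/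
def InterferesOn {V : Type*} [Fintype V] (N : TwoUnicastNetwork V) (S : Set V)
    (Ri : List V) (srcOther : V) (v : V) : Prop :=
  v ∈ S ∧ v ∉ Ri ∧ (∃ w ∈ Ri, w ∈ S ∧ N.E v w) ∧
    ∃ q, IsPath N.E q srcOther v ∧ (∀ x ∈ q, x ∈ S) ∧ ∀ x ∈ q, x ∉ Ri

/-- `n_i(G[S])` : the number of nodes causing interference on `Ri` within the
induced subgraph `G[S]`, the interfering path coming from `srcOther`. -/
noncomputable def nInterf {V : Type*} [Fintype V] (N : TwoUnicastNetwork V)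
    (S : Set V) (Ri : List V) (srcOther : V) : ℕ :=
  {v | InterferesOn N S Ri srcOther v}.ncard

/-- `n_i^D` : the number of nodes of the other path `Rother` causing (direct)
interference on `Ri` in `G`. -/
noncomputable def nDirect {V : Type*} [Fintype V] (N : TwoUnicastNetwork V)
    (Ri Rother : List V) (srcOther : V) : ℕ :=
  {v | InterferesOn N Set.univ Ri srcOther v ∧ v ∈ Rother}.ncard

/-- The pair `(R1, R2)` (paths `s1 → d1` and `s2 → d2`) has manageable
interference: there is `S ⊇ R1 ∪ R2` with `n_1(G[S]) ≠ 1` and `n_2(G[S]) ≠ 1`. -/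
def Manageable {V : Type*} [Fintype V] (N : TwoUnicastNetwork V)
    (R1 R2 : List V) : Prop :=
  ∃ S : Set V, (∀ x ∈ R1, x ∈ S) ∧ (∀ x ∈ R2, x ∈ S) ∧
    nInterf N S R1 N.s2 ≠ 1 ∧ nInterf N S R2 N.s1 ≠ 1

/-- The pair `(R1, R2)` has `(s1,d1)`-manageable interference. -/
def Manageable1 {V : Type*} [Fintype V] (N : TwoUnicastNetwork V)
    (R1 R2 : List V) : Prop :=
  ∃ S : Set V, (∀ x ∈ R1, x ∈ S) ∧ (∀ x ∈ R2, x ∈ S) ∧ nInterf N S R1 N.s2 ≠ 1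

/-- The pair `(R1, R2)` has `(s2,d2)`-manageable interference. -/
def Manageable2 {V : Type*} [Fintype V] (N : TwoUnicastNetwork V)
    (R1 R2 : List V) : Prop :=
  ∃ S : Set V, (∀ x ∈ R1, x ∈ S) ∧ (∀ x ∈ R2, x ∈ S) ∧ nInterf N S R2 N.s1 ≠ 1

/-- Removal of the vertex `v` disconnects `a` from `b` :
every path from `a` to `b` contains `v`. -/
def CutVert {V : Type*} [Fintype V] (N : TwoUnicastNetwork V) (v a b : V) : Prop :=
  ∀ p, IsPath N.E p a b → v ∈ p

/-!
In a layered network consecutive nodes of a path lie in consecutive layers, so a node of a path is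
determined by its layer. The successor `v6` of `v5` avoids `P11` (as `v5` is the last node of `P11`
on `Ps1v2`) and `P22` (else `v5` would interfere directly on `P22`), so it lies on `Pvmv1`.
Rerouting `P22` along `Pvmv1` up to `v2` and then over `v2 → v0` gives a path `R2` disjoint from
`P11`; as `n₁ ≥ 2`, the pair `(P11, R2)` has a single interferer on `R2`, namely `v5`, so every path
from `s1` into `R2` enters it at `v6`. A path `W` from `s2` to `v2` meeting `P11` is covered by this
case; otherwise, prolonged to `v1`, it makes `v1` a second interferer on `P11` inside
`P11 ∪ P22 ∪ W`, so `v2` interferes on `P22` there too, and the witnessing path from `s1` puts `v6`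
on `W`.
-/

namespace IsPath

variable {V : Type*} {E : V → V → Prop} {f : V → ℕ} {p q P M : List V} {u v w x y z a b : V}

theorem head_mem (h : IsPath E p u w) : u ∈ p :=
  List.mem_of_mem_head? h.2.1

theorem last_mem (h : IsPath E p u w) : w ∈ p :=
  List.mem_of_getLast? h.2.2.1

theorem singleton (u : V) : IsPath E [u] u u :=
  ⟨List.cons_ne_nil _ _, rfl, rfl, List.isChain_singleton u⟩

theorem cons (h : IsPath E p v w) (he : E u v) : IsPath E (u :: p) u w := by
  obtain ⟨t, rfl⟩ := List.head?_eq_some_iff.mp h.2.1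
  exact ⟨List.cons_ne_nil _ _, rfl, by simpa using h.2.2.1,
    List.isChain_cons_cons.mpr ⟨he, h.2.2.2⟩⟩

theorem rel_of_getElem? (h : IsPath E p u w) {k : ℕ} (ha : p[k]? = some a)
    (hb : p[k + 1]? = some b) : E a b := by
  obtain ⟨hk, rfl⟩ := List.getElem?_eq_some_iff.mp ha
  obtain ⟨hk', rfl⟩ := List.getElem?_eq_some_iff.mp hb
  exact List.isChain_iff_getElem.mp h.2.2.2 k hk'

theorem append_tail (h₁ : IsPath E p u v) (h₂ : IsPath E q v w) :
    IsPath E (p ++ q.tail) u w := by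
  obtain ⟨p', rfl⟩ := List.getLast?_eq_some_iff.mp h₁.2.2.1
  obtain ⟨q', rfl⟩ := List.head?_eq_some_iff.mp h₂.2.1
  refine ⟨by simp, by simpa using h₁.2.1, by simpa using h₂.2.2.1, ?_⟩
  show List.IsChain E _
  simpa using h₁.2.2.2.append_overlap (l₃ := q') h₂.2.2.2 (List.cons_ne_nil _ _)

theorem mem_append_tail (h₁ : IsPath E p u v) (h₂ : IsPath E q v w) :
    x ∈ p ++ q.tail ↔ x ∈ p ∨ x ∈ q := by
  obtain ⟨q', rfl⟩ := List.head?_eq_some_iff.mp h₂.2.1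
  simp only [List.tail_cons, List.mem_append, List.mem_cons]
  constructor
  · rintro (hx | hx) <;> simp [hx]
  · rintro (hx | rfl | hx)
    exacts [.inl hx, .inl h₁.last_mem, .inr hx]

theorem exists_split (h : IsPath E p u w) (hx : x ∈ p) :
    ∃ p₁ p₂, IsPath E p₁ u x ∧ IsPath E p₂ x w ∧ p = p₁ ++ p₂.tail := by
  obtain ⟨s, t, rfl⟩ := List.append_of_mem hx
  refine ⟨s ++ [x], x :: t, ⟨by simp, ?_, by simp, h.2.2.2.prefix ?_⟩,
    ⟨List.cons_ne_nil _ _, rfl, ?_, h.2.2.2.suffix (List.suffix_append _ _)⟩, by simp⟩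
  · cases s <;> simpa using h.2.1
  · exact ⟨t, by simp⟩
  · simpa using h.2.2.1

theorem exists_detour (hP : IsPath E P a b) (hx : x ∈ P) (hM : IsPath E M x y) (he : E y z)
    (hz : z ∈ P) :
    ∃ R, IsPath E R a b ∧ (∀ r ∈ R, r ∈ P ∨ r ∈ M) ∧ ∀ r ∈ M, r ∈ R := by
  obtain ⟨P₁, P₁', hP₁, -, hP₁eq⟩ := hP.exists_split hx
  obtain ⟨P₂', P₂, hP₂', hP₂, hP₂eq⟩ := hP.exists_split hz
  refine ⟨P₁ ++ M.tail ++ P₂, (hP₁.append_tail hM).append_tail (hP₂.cons he), ?_, ?_⟩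
  · intro r hr
    rcases List.mem_append.mp hr with hr | hr
    · exact ((hP₁.mem_append_tail hM).mp hr).imp_left (fun h => hP₁eq ▸ List.mem_append_left _ h)
    · exact .inl (hP₂eq ▸ (hP₂'.mem_append_tail hP₂).mpr (.inr hr))
  · exact fun r hr => List.mem_append_left _ ((hP₁.mem_append_tail hM).mpr (.inr hr))

theorem exists_first_entry (h : IsPath E p u w) {R : List V} (hu : u ∉ R) (hw : w ∈ R) :
    ∃ q z y, IsPath E q u z ∧ (∀ x ∈ q, x ∉ R) ∧ E z y ∧ y ∈ R ∧ y ∈ p := by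
  induction p generalizing u with
  | nil => exact absurd rfl h.1
  | cons a t ih =>
    obtain rfl : a = u := by simpa using h.2.1
    cases t with
    | nil =>
      obtain rfl : a = w := by simpa using h.2.2.1
      exact absurd hw hu
    | cons b t =>
      obtain ⟨hab, ht⟩ := List.isChain_cons_cons.mp h.2.2.2
      by_cases hb : b ∈ R
      · exact ⟨[a], a, b, singleton a, by simpa using hu, hab, hb, by simp⟩
      · obtain ⟨q, z, y, hq, hqR, hzy, hyR, hyt⟩ :=
          ih ⟨List.cons_ne_nil _ _, rfl, by simpa using h.2.2.1, ht⟩ hb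
        exact ⟨a :: q, z, y, hq.cons hab, List.forall_mem_cons.mpr ⟨hu, hqR⟩, hzy, hyR,
          List.mem_cons_of_mem _ hyt⟩

theorem grade_getElem (hf : ∀ a b, E a b → f b = f a + 1) (h : IsPath E p u w) :
    ∀ (i : ℕ) (hi : i < p.length), f p[i] = f u + i
  | 0, hi => by
    obtain ⟨t, rfl⟩ := List.head?_eq_some_iff.mp h.2.1
    rfl
  | i + 1, hi => by
    rw [hf _ _ (List.isChain_iff_getElem.mp h.2.2.2 i hi), grade_getElem hf h i (by omega)]
    omega

theorem grade_eq_add_idxOf [BEq V] [LawfulBEq V] (hf : ∀ a b, E a b → f b = f a + 1)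
    (h : IsPath E p u w) (hx : x ∈ p) : f x = f u + p.idxOf x := by
  have hlt := List.idxOf_lt_length_iff.mpr hx
  simpa only [List.getElem_idxOf hlt] using h.grade_getElem hf _ hlt

theorem grade_head_le (hf : ∀ a b, E a b → f b = f a + 1) (h : IsPath E p u w) (hx : x ∈ p) :
    f u ≤ f x := by
  obtain ⟨i, hi, rfl⟩ := List.mem_iff_getElem.mp hx
  simp [h.grade_getElem hf i hi]

theorem grade_le_last (hf : ∀ a b, E a b → f b = f a + 1) (h : IsPath E p u w) (hx : x ∈ p) :
    f x ≤ f w := by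
  obtain ⟨-, p₂, -, hp₂, -⟩ := h.exists_split hx
  exact hp₂.grade_head_le hf hp₂.last_mem

theorem eq_of_grade_eq (hf : ∀ a b, E a b → f b = f a + 1) (h : IsPath E p u w) (hx : x ∈ p)
    (hy : y ∈ p) (hxy : f x = f y) : x = y := by
  obtain ⟨i, hi, rfl⟩ := List.mem_iff_getElem.mp hx
  obtain ⟨j, hj, rfl⟩ := List.mem_iff_getElem.mp hy
  have : i = j := by have := h.grade_getElem hf i hi; have := h.grade_getElem hf j hj; omega
  subst this
  rfl

theorem mem_left_of_grade_le (hf : ∀ a b, E a b → f b = f a + 1) (h₁ : IsPath E p u v)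
    (h₂ : IsPath E q v w) (hx : x ∈ p ++ q.tail) (hxv : f x ≤ f v) : x ∈ p := by
  rcases (h₁.mem_append_tail h₂).mp hx with hx | hx
  · exact hx
  · rw [h₂.eq_of_grade_eq hf hx h₂.head_mem (le_antisymm hxv (h₂.grade_head_le hf hx))]
    exact h₁.last_mem

theorem notMem_of_rel_of_forall_idxOf_le [BEq V] [LawfulBEq V]
    (hf : ∀ a b, E a b → f b = f a + 1) (h : IsPath E p u w) (hab : E a b) (ha : a ∈ p)
    (hb : b ∈ p) {Q : List V} (hQ : ∀ x ∈ p, x ∈ Q → p.idxOf x ≤ p.idxOf a) : b ∉ Q := by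
  intro hbQ
  have := hQ b hb hbQ
  have := h.grade_eq_add_idxOf hf ha
  have := h.grade_eq_add_idxOf hf hb
  have := hf a b hab
  omega

end IsPath

section Interference

variable {V : Type*} [Fintype V] {N : TwoUnicastNetwork V} {S T : Set V}
  {R R₁ R₂ P q : List V} {s d v w : V}

theorem InterferesOn.mono (hST : S ⊆ T) (h : InterferesOn N S R s v) :
    InterferesOn N T R s v := by
  obtain ⟨hvS, hvR, ⟨w, hwR, hwS, he⟩, q, hq, hqS, hqR⟩ := h
  exact ⟨hST hvS, hvR, ⟨w, hwR, hST hwS, he⟩, q, hq, fun x hx => hST (hqS x hx), hqR⟩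

theorem interferesOn_of_isPath (hq : IsPath N.E q s v) (hqR : ∀ x ∈ q, x ∉ R)
    (hqS : ∀ x ∈ q, x ∈ S) (hw : w ∈ R) (hwS : w ∈ S) (he : N.E v w) :
    InterferesOn N S R s v :=
  ⟨hqS v hq.last_mem, hqR v hq.last_mem, ⟨w, hw, hwS, he⟩, q, hq, hqS, hqR⟩

theorem interferesOn_of_mem_isPath (hP : IsPath N.E P s d) (hv : v ∈ P)
    (hPR : ∀ x ∈ P, x ∉ R) (hPS : ∀ x ∈ P, x ∈ S) (hw : w ∈ R) (hwS : w ∈ S) (he : N.E v w) :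
    InterferesOn N S R s v := by
  obtain ⟨p₁, p₂, hp₁, -, rfl⟩ := hP.exists_split hv
  exact interferesOn_of_isPath hp₁ (fun x hx => hPR x (List.mem_append_left _ hx))
    (fun x hx => hPS x (List.mem_append_left _ hx)) hw hwS he

theorem InterferesOn.eq_of_nInterf_eq_one {a b : V} (h : nInterf N S R s = 1)
    (ha : InterferesOn N S R s a) (hb : InterferesOn N S R s b) : a = b :=
  (Set.ncard_le_one_iff).mp h.le ha hb

theorem one_lt_nInterf {a b : V} (ha : InterferesOn N S R s a) (hb : InterferesOn N S R s b)
    (hab : a ≠ b) : 1 < nInterf N S R s :=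
  (Set.one_lt_ncard_iff).mpr ⟨a, b, ha, hb, hab⟩

theorem nInterf_eq_one_of_not_manageable (h : ¬ Manageable N R₁ R₂) (h₁ : ∀ x ∈ R₁, x ∈ S)
    (h₂ : ∀ x ∈ R₂, x ∈ S) (hn : nInterf N S R₁ N.s2 ≠ 1) : nInterf N S R₂ N.s1 = 1 := by
  by_contra hne
  exact h ⟨S, h₁, h₂, hn, hne⟩

/-- The last node of `W` before it enters `R` interferes on `R`, hence is `z`, and then the
layering pins down the entry node. -/
theorem mem_of_isPath_of_nInterf_eq_one {a b z y t : V} {W : List V}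
    (hR : IsPath N.E R a b) (hone : nInterf N Set.univ R s = 1)
    (hz : InterferesOn N Set.univ R s z) (hzy : N.E z y) (hy : y ∈ R)
    (hW : IsPath N.E W s t) (ht : t ∈ R) : y ∈ W := by
  obtain ⟨q, hq, -, hqR⟩ := hz.2.2.2
  obtain ⟨q', z', y', hq', hq'R, hzy', hy'R, hy'W⟩ :=
    hW.exists_first_entry (hqR s hq.head_mem) ht
  have hz' : z' = z := (interferesOn_of_isPath hq' hq'R (fun _ _ => trivial) hy'R trivial
    hzy').eq_of_nInterf_eq_one hone hz
  subst hz'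
  have hy' : y' = y := hR.eq_of_grade_eq N.edge_layer hy'R hy
    (by rw [N.edge_layer _ _ hzy', N.edge_layer _ _ hzy])
  exact hy' ▸ hy'W

theorem notMem_of_rel_of_interferers_eq_singleton {P₁ P₂ : List V} {a b v₂ : V}
    (hP₁ : IsPath N.E P₁ N.s1 d) (hdisj : P₁.Disjoint P₂)
    (hv₂ : {v | InterferesOn N Set.univ P₂ N.s1 v} = {v₂}) (hv₂P₁ : v₂ ∉ P₁) (ha : a ∈ P₁)
    (hab : N.E a b) : b ∉ P₂ := by
  intro hb
  have ha₂ : a ∈ ({v₂} : Set V) := hv₂ ▸ interferesOn_of_mem_isPath hP₁ ha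
    (fun x hx h => hdisj hx h) (fun _ _ => trivial) hb trivial hab
  exact hv₂P₁ (ha₂ ▸ ha)

end Interference

section CaseC1

variable {V : Type*} [Fintype V] {N : TwoUnicastNetwork V} {P₁ P₂ M T W : List V}
  {v₀ v₁ v₂ v₃ v₅ v₆ vm y : V}

theorem mem_of_isPath_from_s1
    (hNo : ∀ R, IsPath N.E R N.s2 N.d2 → P₁.Disjoint R → ¬ Manageable N P₁ R)
    (hP₁ : IsPath N.E P₁ N.s1 N.d1) (hP₂ : IsPath N.E P₂ N.s2 N.d2) (hdisj : P₁.Disjoint P₂)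
    (hn₁ : nInterf N Set.univ P₁ N.s2 ≠ 1) (hvm : vm ∈ P₂) (hM : IsPath N.E M vm v₂)
    (hMP₁ : ∀ x ∈ M, x ∉ P₁) (he₂₀ : N.E v₂ v₀) (hv₀ : v₀ ∈ P₂) (hv₅ : v₅ ∈ P₁)
    (he₅₆ : N.E v₅ v₆) (hv₆ : v₆ ∈ M) {p : List V} (hp : IsPath N.E p N.s1 v₂) : v₆ ∈ p := by
  obtain ⟨R, hR, hRsub, hMR⟩ := hP₂.exists_detour hvm hM he₂₀ hv₀
  have hRP₁ : ∀ x ∈ R, x ∉ P₁ := fun x hx =>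
    (hRsub x hx).elim (fun h h' => hdisj h' h) (hMP₁ x)
  have hone : nInterf N Set.univ R N.s1 = 1 :=
    nInterf_eq_one_of_not_manageable (hNo R hR fun x h h' => hRP₁ x h' h)
      (fun _ _ => trivial) (fun _ _ => trivial) hn₁
  have hv₅R : InterferesOn N Set.univ R N.s1 v₅ := interferesOn_of_mem_isPath hP₁ hv₅
    (fun x hx h => hRP₁ x h hx) (fun _ _ => trivial) (hMR v₆ hv₆) trivial he₅₆
  exact mem_of_isPath_of_nInterf_eq_one hR hone hv₅R he₅₆ (hMR v₆ hv₆) hp (hMR v₂ hM.last_mem)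

theorem exists_isPath_to_interferer_within (hNo : ¬ Manageable N P₁ P₂)
    (hdisj : P₁.Disjoint P₂) (hP₂ : IsPath N.E P₂ N.s2 N.d2)
    (hv₃ : InterferesOn N Set.univ P₁ N.s2 v₃) (hv₃P₂ : v₃ ∈ P₂)
    (hv₁ : InterferesOn N Set.univ P₁ N.s2 v₁) (hv₁P₂ : v₁ ∉ P₂)
    (hW : IsPath N.E W N.s2 v₁) (hWP₁ : ∀ x ∈ W, x ∉ P₁)
    (hv₂ : {v | InterferesOn N Set.univ P₂ N.s1 v} = {v₂}) :
    ∃ q, IsPath N.E q N.s1 v₂ ∧ ∀ x ∈ q, x ∈ P₁ ∨ x ∈ P₂ ∨ x ∈ W := by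
  set S : Set V := {x | x ∈ P₁ ∨ x ∈ P₂ ∨ x ∈ W}
  obtain ⟨w₃, hw₃, -, he₃⟩ := hv₃.2.2.1
  have h₃ : InterferesOn N S P₁ N.s2 v₃ := interferesOn_of_mem_isPath hP₂ hv₃P₂
    (fun x hx h => hdisj h hx) (fun x hx => .inr (.inl hx)) hw₃ (.inl hw₃) he₃
  obtain ⟨w₁, hw₁, -, he₁⟩ := hv₁.2.2.1
  have h₁ : InterferesOn N S P₁ N.s2 v₁ := interferesOn_of_isPath hW hWP₁
    (fun x hx => .inr (.inr hx)) hw₁ (.inl hw₁) he₁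
  have hone : nInterf N S P₂ N.s1 = 1 := nInterf_eq_one_of_not_manageable hNo
    (fun x hx => .inl hx) (fun x hx => .inr (.inl hx))
    (one_lt_nInterf h₃ h₁ (by rintro rfl; exact hv₁P₂ hv₃P₂)).ne'
  obtain ⟨a, ha⟩ := Set.ncard_eq_one.mp hone
  have haS : a ∈ {v | InterferesOn N S P₂ N.s1 v} := ha ▸ rfl
  have ha₂ : a = v₂ := by
    rw [← Set.mem_singleton_iff, ← hv₂]
    exact haS.mono (Set.subset_univ S)
  obtain ⟨-, -, -, q, hq, hqS, -⟩ := haS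
  exact ⟨q, ha₂ ▸ hq, hqS⟩

theorem mem_of_isPath_from_s2 (hNo : ¬ Manageable N P₁ P₂) (hdisj : P₁.Disjoint P₂)
    (hP₁ : IsPath N.E P₁ N.s1 N.d1) (hP₂ : IsPath N.E P₂ N.s2 N.d2)
    (hv₃ : InterferesOn N Set.univ P₁ N.s2 v₃) (hv₃P₂ : v₃ ∈ P₂)
    (hv₁ : InterferesOn N Set.univ P₁ N.s2 v₁) (hv₁P₂ : v₁ ∉ P₂)
    (hv₂ : {v | InterferesOn N Set.univ P₂ N.s1 v} = {v₂})
    (hT : IsPath N.E T v₂ v₁) (hTP₁ : ∀ x ∈ T, x ∉ P₁)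
    (hyP₁ : y ∉ P₁) (hyP₂ : y ∉ P₂) (hy : N.layer y ≤ N.layer v₂)
    (hcut : ∀ p, IsPath N.E p N.s1 v₂ → y ∈ p) (hW : IsPath N.E W N.s2 v₂) : y ∈ W := by
  by_cases hmeet : ∃ x ∈ W, x ∈ P₁
  · obtain ⟨x, hxW, hxP₁⟩ := hmeet
    obtain ⟨a₁, a₂, ha₁, -, rfl⟩ := hP₁.exists_split hxP₁
    obtain ⟨b₁, b₂, hb₁, hb₂, rfl⟩ := hW.exists_split hxW
    rcases (ha₁.mem_append_tail hb₂).mp (hcut _ (ha₁.append_tail hb₂)) with h | h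
    · exact absurd (List.mem_append_left _ h) hyP₁
    · exact (hb₁.mem_append_tail hb₂).mpr (.inr h)
  · push Not at hmeet
    obtain ⟨q, hq, hqS⟩ := exists_isPath_to_interferer_within hNo hdisj hP₂ hv₃ hv₃P₂ hv₁ hv₁P₂
      (hW.append_tail hT) (fun x hx => ((hW.mem_append_tail hT).mp hx).elim (hmeet x) (hTP₁ x))
      hv₂
    rcases hqS y (hcut q hq) with h | h | h
    · exact absurd h hyP₁
    · exact absurd h hyP₂
    · exact hW.mem_left_of_grade_le N.edge_layer hT h hy

end CaseC1

theorem statement9_general {V : Type*} [Fintype V] [DecidableEq V]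
    (N : TwoUnicastNetwork V)
    (P11 P22 Ps2v1 Pvmv1 Ps1v2 : List V)
    (v0 v1 v2 v3 v5 v6 vm : V)
    (hP11 : IsPath N.E P11 N.s1 N.d1)
    (hP22 : IsPath N.E P22 N.s2 N.d2)
    (hdisj : P11.Disjoint P22)
    (hNoMan : ∀ R1 R2 : List V, IsPath N.E R1 N.s1 N.d1 → IsPath N.E R2 N.s2 N.d2 →
      R1.Disjoint R2 → ¬ Manageable N R1 R2)
    (hn1 : 2 ≤ nInterf N Set.univ P11 N.s2)
    (hv3unique : {v | InterferesOn N Set.univ P11 N.s2 v ∧ v ∈ P22} = {v3})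
    (hv1P22 : v1 ∉ P22)
    (hv1int : InterferesOn N Set.univ P11 N.s2 v1)
    (hPs2v1disj : Ps2v1.Disjoint P11)
    (hvmP22 : vm ∈ P22)
    (hPvmv1 : IsPath N.E Pvmv1 vm v1)
    (hPvmv1suffix : Pvmv1 <:+ Ps2v1)
    (hv2Pvmv1 : v2 ∈ Pvmv1)
    (hv2unique : {v | InterferesOn N Set.univ P22 N.s1 v} = {v2})
    (hv0P22 : v0 ∈ P22)
    (hv2v0 : N.E v2 v0)
    (hPs1v2 : IsPath N.E Ps1v2 N.s1 v2)
    (hPs1v2sub : ∀ x ∈ Ps1v2, x ∈ P11 ∨ x ∈ P22 ∨ x ∈ Pvmv1)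
    (hv5P11 : v5 ∈ P11)
    (hv5last : ∀ x ∈ Ps1v2, x ∈ P11 → Ps1v2.idxOf x ≤ Ps1v2.idxOf v5)
    (hv6succ : ∃ k : ℕ, Ps1v2[k]? = some v5 ∧ Ps1v2[k+1]? = some v6) :
    (∀ p : List V, IsPath N.E p N.s1 v2 → v6 ∈ p) ∧
    (∀ p : List V, IsPath N.E p N.s2 v2 → v6 ∈ p) := by
  obtain ⟨k, hk₅, hk₆⟩ := hv6succ
  have he₅₆ : N.E v5 v6 := hPs1v2.rel_of_getElem? hk₅ hk₆
  have hv₆ : v6 ∈ Ps1v2 := List.mem_of_getElem? hk₆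
  have hv₆₂ : N.layer v6 ≤ N.layer v2 := hPs1v2.grade_le_last N.edge_layer hv₆
  have hPvmP11 : ∀ x ∈ Pvmv1, x ∉ P11 := fun x hx => hPs2v1disj (hPvmv1suffix.subset hx)
  have hv6P11 : v6 ∉ P11 := hPs1v2.notMem_of_rel_of_forall_idxOf_le N.edge_layer he₅₆
    (List.mem_of_getElem? hk₅) hv₆ hv5last
  have hv6P22 : v6 ∉ P22 := notMem_of_rel_of_interferers_eq_singleton hP11 hdisj hv2unique
    (hPvmP11 v2 hv2Pvmv1) hv5P11 he₅₆
  have hv6Pvm : v6 ∈ Pvmv1 := ((hPs1v2sub v6 hv₆).resolve_left hv6P11).resolve_left hv6P22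
  obtain ⟨M, T, hM, hT, rfl⟩ := hPvmv1.exists_split hv2Pvmv1
  have hcut : ∀ p, IsPath N.E p N.s1 v2 → v6 ∈ p := fun p hp =>
    mem_of_isPath_from_s1 (hNoMan P11 · hP11) hP11 hP22 hdisj (by omega) hvmP22 hM
      (fun x hx => hPvmP11 x (List.mem_append_left _ hx)) hv2v0 hv0P22 hv5P11 he₅₆
      (hM.mem_left_of_grade_le N.edge_layer hT hv6Pvm hv₆₂) hp
  obtain ⟨hv3, hv3P22⟩ : v3 ∈ {v | InterferesOn N Set.univ P11 N.s2 v ∧ v ∈ P22} :=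
    hv3unique ▸ rfl
  exact ⟨hcut, fun W hW => mem_of_isPath_from_s2 (hNoMan P11 P22 hP11 hP22 hdisj) hdisj hP11
    hP22 hv3 hv3P22 hv1int hv1P22 hv2unique hT
    (fun x hx => hPvmP11 x ((hM.mem_append_tail hT).mpr (.inr hx))) hv6P11 hv6P22 hv₆₂ hcut hW⟩

theorem statement9 {V : Type*} [Fintype V] [DecidableEq V]
    (N : TwoUnicastNetwork V)
    (P11 P22 Ps2v1 Pvmv1 Ps1v2 : List V)
    (v0 v1 v2 v3 v4 v5 v6 vm : V)
    (hP11 : IsPath N.E P11 N.s1 N.d1)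
    (hP22 : IsPath N.E P22 N.s2 N.d2)
    (hdisj : P11.Disjoint P22)
    (hNoMan : ∀ R1 R2 : List V, IsPath N.E R1 N.s1 N.d1 → IsPath N.E R2 N.s2 N.d2 →
      R1.Disjoint R2 → ¬ Manageable N R1 R2)
    (hn1 : 2 ≤ nInterf N Set.univ P11 N.s2)
    (hn1D : nDirect N P11 P22 N.s2 = 1)
    (hn2 : nInterf N Set.univ P22 N.s1 = 1)
    (hn2D : nDirect N P22 P11 N.s1 = 0)
    (hv3P22 : v3 ∈ P22)
    (hv3unique : {v | InterferesOn N Set.univ P11 N.s2 v ∧ v ∈ P22} = {v3})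
    (hv4P11 : v4 ∈ P11)
    (hv3v4 : N.E v3 v4)
    (hv3v4unique : ∀ w ∈ P11, N.E v3 w → w = v4)
    (hv1P11 : v1 ∉ P11)
    (hv1P22 : v1 ∉ P22)
    (hv1int : InterferesOn N Set.univ P11 N.s2 v1)
    (hPs2v1 : IsPath N.E Ps2v1 N.s2 v1)
    (hPs2v1disj : Ps2v1.Disjoint P11)
    (hvmP22 : vm ∈ P22)
    (hvmPs2v1 : vm ∈ Ps2v1)
    (hvmlast : ∀ x ∈ Ps2v1, x ∈ P22 → Ps2v1.idxOf x ≤ Ps2v1.idxOf vm)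
    (hPvmv1 : IsPath N.E Pvmv1 vm v1)
    (hPvmv1suffix : Pvmv1 <:+ Ps2v1)
    (hv2Pvmv1 : v2 ∈ Pvmv1)
    (hv2ne : v2 ≠ vm)
    (hv2unique : {v | InterferesOn N Set.univ P22 N.s1 v} = {v2})
    (hv0P22 : v0 ∈ P22)
    (hv2v0 : N.E v2 v0)
    (hv2v0unique : ∀ w ∈ P22, N.E v2 w → w = v0)
    (hPs1v2 : IsPath N.E Ps1v2 N.s1 v2)
    (hPs1v2sub : ∀ x ∈ Ps1v2, x ∈ P11 ∨ x ∈ P22 ∨ x ∈ Pvmv1)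
    (hv5P11 : v5 ∈ P11)
    (hv5mem : v5 ∈ Ps1v2)
    (hv5last : ∀ x ∈ Ps1v2, x ∈ P11 → Ps1v2.idxOf x ≤ Ps1v2.idxOf v5)
    (hv6succ : ∃ k : ℕ, Ps1v2[k]? = some v5 ∧ Ps1v2[k+1]? = some v6) :
    (∀ p : List V, IsPath N.E p N.s1 v2 → v6 ∈ p) ∧
    (∀ p : List V, IsPath N.E p N.s2 v2 → v6 ∈ p) :=
  statement9_general N P11 P22 Ps2v1 Pvmv1 Ps1v2 v0 v1 v2 v3 v5 v6 vm hP11 hP22 hdisj hNoMan hn1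
    hv3unique hv1P22 hv1int hPs2v1disj hvmP22 hPvmv1 hPvmv1suffix hv2Pvmv1 hv2unique hv0P22 hv2v0
    hPs1v2 hPs1v2sub hv5P11 hv5last hv6succ
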